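/- For every integer J ≥ 2 and every θ > 0, the Mallows variance expression is strictly positive: J e^{−θ}/(1 − e^{−θ})² − Σ_{j=1}^J j² e^{−jθ}/(1 − e^{−jθ})² > 0. -/

import Mathlib

/-!
Writing `exp (-x) / (1 - exp (-x)) ^ 2 = (4 * sinh (x / 2) ^ 2)⁻¹`, the `j`-th summand is
`(j * sinh (θ / 2) / sinh (j * θ / 2)) ^ 2` times the `j = 1` summand. Since `sinh` is strictly
superadditive on `(0, ∞)`, `j * sinh t < sinh (j * t)` for `j ≥ 2` and `t > 0`, so every summand
is at most the first one, strictly for `j ≥ 2`, and the sum of the `J` summands is less than `J`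
times the first.
-/

open Real

theorem sinh_add_sinh_lt_sinh_add {a b : ℝ} (ha : 0 < a) (hb : 0 < b) :
    sinh a + sinh b < sinh (a + b) := by
  rw [sinh_add]
  nlinarith [sinh_pos_iff.2 ha, sinh_pos_iff.2 hb, one_lt_cosh.2 ha.ne', one_lt_cosh.2 hb.ne']

theorem nat_mul_sinh_lt_sinh_nat_mul {t : ℝ} (ht : 0 < t) {n : ℕ} (hn : 2 ≤ n) :
    n * sinh t < sinh (n * t) := by
  induction n, hn using Nat.le_induction with
  | base => simpa [two_mul] using sinh_add_sinh_lt_sinh_add ht ht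
  | succ n hn ih =>
    have hnt : 0 < n * t := mul_pos (by norm_cast; omega) ht
    calc ((n + 1 : ℕ) : ℝ) * sinh t = n * sinh t + sinh t := by push_cast; ring
      _ < sinh (n * t) + sinh t := by linarith
      _ < sinh (n * t + t) := sinh_add_sinh_lt_sinh_add hnt ht
      _ = sinh ((n + 1 : ℕ) * t) := by push_cast; ring_nf

theorem exp_neg_div_one_sub_exp_neg_sq (x : ℝ) :
    exp (-x) / (1 - exp (-x)) ^ 2 = (4 * sinh (x / 2) ^ 2)⁻¹ := by
  have hsq : exp (-x) = exp (-(x / 2)) ^ 2 := by rw [← exp_nat_mul]; ring_nf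
  have hmul : exp (x / 2) * exp (-(x / 2)) = 1 := by rw [← exp_add]; simp
  have h : (1 - exp (-x)) ^ 2 = exp (-x) * (4 * sinh (x / 2) ^ 2) := by
    rw [sinh_eq, hsq]
    linear_combination (2 * exp (-(x / 2)) ^ 2 - exp (x / 2) * exp (-(x / 2)) - 1) * hmul
  rw [h, div_mul_cancel_left₀ (exp_pos _).ne']

theorem nat_sq_mul_exp_neg_div_lt {θ : ℝ} (hθ : 0 < θ) {j : ℕ} (hj : 2 ≤ j) :
    (j : ℝ) ^ 2 * exp (-j * θ) / (1 - exp (-j * θ)) ^ 2 < exp (-θ) / (1 - exp (-θ)) ^ 2 := by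
  have hj0 : (0 : ℝ) < j := by norm_cast; omega
  have hs : 0 < sinh (θ / 2) := sinh_pos_iff.2 (half_pos hθ)
  have hlt : sinh (θ / 2) < sinh (j * (θ / 2)) / j := by
    rw [lt_div_iff₀ hj0, mul_comm]
    exact nat_mul_sinh_lt_sinh_nat_mul (half_pos hθ) hj
  rw [neg_mul, mul_div_assoc, exp_neg_div_one_sub_exp_neg_sq, exp_neg_div_one_sub_exp_neg_sq,
    mul_div_assoc]
  calc (j : ℝ) ^ 2 * (4 * sinh (j * (θ / 2)) ^ 2)⁻¹ = (4 * (sinh (j * (θ / 2)) / j) ^ 2)⁻¹ := by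
        field_simp
    _ < (4 * sinh (θ / 2) ^ 2)⁻¹ := by gcongr

theorem mallows_variance_pos (J : ℕ) (hJ : 2 ≤ J) (θ : ℝ) (hθ : 0 < θ) :
    0 < (J : ℝ) * Real.exp (-θ) / (1 - Real.exp (-θ)) ^ 2 -
      ∑ j ∈ Finset.Icc 1 J,
        (j : ℝ) ^ 2 * Real.exp (-(j : ℝ) * θ) / (1 - Real.exp (-(j : ℝ) * θ)) ^ 2 := by
  have hle : ∀ j ∈ Finset.Icc 1 J,
      (j : ℝ) ^ 2 * exp (-j * θ) / (1 - exp (-j * θ)) ^ 2 ≤ exp (-θ) / (1 - exp (-θ)) ^ 2 := by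
    intro j hj
    rcases (Finset.mem_Icc.1 hj).1.eq_or_lt with rfl | hj2
    · simp
    · exact (nat_sq_mul_exp_neg_div_lt hθ hj2).le
  have hsum := Finset.sum_lt_sum hle
    ⟨2, Finset.mem_Icc.2 ⟨one_le_two, hJ⟩, nat_sq_mul_exp_neg_div_lt hθ le_rfl⟩
  rw [Finset.sum_const, Nat.card_Icc, Nat.add_sub_cancel, nsmul_eq_mul, ← mul_div_assoc] at hsum
  linarith
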